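/- Let n ≥ 6, let ψ : {1,…,n} → ℂ and let P be the homogeneous operator of degree 1 associated to ψ. Suppose P is a Rota–Baxter operator of weight 0, i.e. P(x)·P(y) = P(x·P(y) + P(x)·y) for all x, y ∈ A, and suppose ψ(1) ≠ 0. Then ψ(n) = 0, and: (a) if ψ(2) ≠ 0, then (i+1)·ψ(i) = 2·ψ(1) for all 1 ≤ i ≤ n−1; (b) if ψ(2) = 0, then (i+1)·ψ(i) = 2·ψ(1) for every odd i with 1 ≤ i ≤ n−1, and ψ(i) = 0 for every even i with 1 ≤ i ≤ n−1. -/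
import Mathlib


open Finset

/-- Coordinate space of the `n`-dimensional complex null-filiform associative algebra,
with respect to the basis `e_1, …, e_n` (coordinate `m : Fin n` corresponds to `e_{m+1}`). -/
abbrev NF (n : ℕ) : Type := Fin n → ℂ

/-- Multiplication of the null-filiform algebra: `e_i · e_j = e_{i+j}` if `i + j ≤ n`
and `e_i · e_j = 0` if `i + j > n`, extended bilinearly. -/
noncomputable def nfMul {n : ℕ} (x y : NF n) : NF n :=
  fun m => ∑ i : Fin n, ∑ j : Fin n,
    if (i : ℕ) + (j : ℕ) + 1 = (m : ℕ) then x i * y j else 0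

/-- The basis element `e_k`, for `1 ≤ k ≤ n` (it is `0` if `k = 0` or `k > n`). -/
noncomputable def nfE (n k : ℕ) : NF n := fun m => if (m : ℕ) + 1 = k then 1 else 0

/-- The `k`-th power (for `k ≥ 1`) of an element of the null-filiform algebra. -/
noncomputable def nfPow {n : ℕ} (x : NF n) : ℕ → NF n
  | 0 => 0
  | 1 => x
  | k + 2 => nfMul (nfPow x (k + 1)) x


lemma nfMul_smul_left {n : ℕ} (a : ℂ) (x y : NF n) : nfMul (a • x) y = a • nfMul x y := by
  funext m
  simp only [nfMul, Pi.smul_apply, smul_eq_mul, Finset.mul_sum]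
  refine Finset.sum_congr rfl fun i _ => Finset.sum_congr rfl fun j _ => ?_
  split_ifs <;> ring

lemma nfMul_smul_right {n : ℕ} (a : ℂ) (x y : NF n) : nfMul x (a • y) = a • nfMul x y := by
  funext m
  simp only [nfMul, Pi.smul_apply, smul_eq_mul, Finset.mul_sum]
  refine Finset.sum_congr rfl fun i _ => Finset.sum_congr rfl fun j _ => ?_
  split_ifs <;> ring

lemma nfE_eq_zero {n k : ℕ} (h : n < k) : nfE n k = 0 := by
  funext m
  simp only [nfE, Pi.zero_apply]
  rw [if_neg]
  omega

lemma nfMul_nfE {n : ℕ} (i j : ℕ) (hi1 : 1 ≤ i) (hin : i ≤ n) (hj1 : 1 ≤ j) (hjn : j ≤ n) :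
    nfMul (nfE n i) (nfE n j) = nfE n (i + j) := by
  funext m
  simp only [nfMul, nfE]
  rw [Finset.sum_eq_single (⟨i - 1, by omega⟩ : Fin n)]
  · rw [Finset.sum_eq_single (⟨j - 1, by omega⟩ : Fin n)]
    · simp only [Fin.val_mk]
      have hii : i - 1 + 1 = i := by omega
      have hjj : j - 1 + 1 = j := by omega
      simp only [hii, hjj, if_pos rfl, mul_one]
      by_cases hc : i - 1 + (j - 1) + 1 = (m : ℕ)
      · rw [if_pos hc, if_pos (show (m : ℕ) + 1 = i + j by omega)]
        norm_num
      · rw [if_neg hc, if_neg (show ¬((m : ℕ) + 1 = i + j) by omega)]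
    · intro b _ hb
      have hbj : (b : ℕ) + 1 ≠ j := by
        intro h
        exact hb (Fin.ext (show (b : ℕ) = j - 1 by omega))
      simp [hbj]
    · intro h
      exact absurd (Finset.mem_univ _) h
  · intro a _ ha
    have hai : (a : ℕ) + 1 ≠ i := by
      intro h
      exact ha (Fin.ext (show (a : ℕ) = i - 1 by omega))
    simp [hai]
  · intro h
    exact absurd (Finset.mem_univ _) h

lemma smul_nfE_inj {n : ℕ} (k : ℕ) (hk1 : 1 ≤ k) (hk : k ≤ n) {a b : ℂ}
    (h : a • nfE n k = b • nfE n k) : a = b := by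
  have h2 := congrFun h ⟨k - 1, by omega⟩
  simpa [nfE, show k - 1 + 1 = k from by omega] using h2

/-- Rota–Baxter operator of weight `0` and degree `1` with `ψ(1) ≠ 0`:
then `ψ(n) = 0` and (a) if `ψ(2) ≠ 0` then `(i+1)ψ(i) = 2ψ(1)` for `1 ≤ i ≤ n−1`;
(b) if `ψ(2) = 0` then `(i+1)ψ(i) = 2ψ(1)` for odd `i` and `ψ(i) = 0` for even `i`. -/
theorem rota_baxter_weight0_degree1_psi1_ne_zero (n : ℕ) (hn : 6 ≤ n)
    (ψ : ℕ → ℂ) (P : NF n →ₗ[ℂ] NF n)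
    (hP : ∀ i, 1 ≤ i → i ≤ n →
      P (nfE n i) = ψ i • nfE n (if i + 1 ≤ n then i + 1 else i + 1 - n))
    (hRB : ∀ x y : NF n,
      nfMul (P x) (P y) = P (nfMul x (P y) + nfMul (P x) y))
    (h1 : ψ 1 ≠ 0) :
    ψ n = 0 ∧
    (ψ 2 ≠ 0 → ∀ i, 1 ≤ i → i ≤ n - 1 → ((i : ℂ) + 1) * ψ i = 2 * ψ 1) ∧
    (ψ 2 = 0 → ∀ i, 1 ≤ i → i ≤ n - 1 →
      (Odd i → ((i : ℂ) + 1) * ψ i = 2 * ψ 1) ∧ (Even i → ψ i = 0)) := by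
  have hPlt : ∀ i, 1 ≤ i → i + 1 ≤ n → P (nfE n i) = ψ i • nfE n (i + 1) := by
    intro i h1i h2i
    rw [hP i h1i (by omega), if_pos h2i]
  have E1 : ∀ i j, 1 ≤ i → 1 ≤ j → i + j + 2 ≤ n →
      ψ i * ψ j = (ψ i + ψ j) * ψ (i + j + 1) := by
    intro i j hi hj hij
    have h := hRB (nfE n i) (nfE n j)
    rw [hPlt i hi (by omega), hPlt j hj (by omega)] at h
    rw [nfMul_smul_left, nfMul_smul_right, nfMul_smul_right, nfMul_smul_left] at h
    rw [nfMul_nfE (i+1) (j+1) (by omega) (by omega) (by omega) (by omega)] at h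
    rw [nfMul_nfE i (j+1) hi (by omega) (by omega) (by omega)] at h
    rw [nfMul_nfE (i+1) j (by omega) (by omega) hj (by omega)] at h
    rw [show i+1+(j+1) = i+j+2 from by omega, show i+(j+1) = i+j+1 from by omega,
      show i+1+j = i+j+1 from by omega] at h
    rw [map_add, map_smul, map_smul, hPlt (i+j+1) (by omega) (by omega),
      show i+j+1+1 = i+j+2 from by omega] at h
    rw [smul_smul, smul_smul, smul_smul, ← add_smul] at h
    have := smul_nfE_inj (i+j+2) (by omega) hij h
    linear_combination this
  have E3 : ∀ j, 1 ≤ j → j + 2 ≤ n → ψ n * ψ j = ψ n * ψ (j + 1) := by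
    intro j hj hj2
    have h := hRB (nfE n n) (nfE n j)
    have hPn : P (nfE n n) = ψ n • nfE n 1 := by
      rw [hP n (by omega) le_rfl, if_neg (by omega), show n + 1 - n = 1 from by omega]
    rw [hPn, hPlt j hj (by omega)] at h
    rw [nfMul_smul_left, nfMul_smul_right, nfMul_smul_right, nfMul_smul_left] at h
    rw [nfMul_nfE 1 (j+1) le_rfl (by omega) (by omega) (by omega)] at h
    rw [nfMul_nfE n (j+1) (by omega) le_rfl (by omega) (by omega)] at h
    rw [nfMul_nfE 1 j le_rfl (by omega) hj (by omega)] at h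
    rw [nfE_eq_zero (show n < n + (j+1) by omega), smul_zero] at h
    rw [map_add, map_zero, zero_add, map_smul,
      show 1 + j = j + 1 from by omega, hPlt (j+1) (by omega) (by omega)] at h
    rw [show 1+(j+1) = j+2 from by omega, show j+1+1 = j+2 from by omega] at h
    rw [smul_smul, smul_smul] at h
    have := smul_nfE_inj (j+2) (by omega) (by omega) h
    linear_combination this
  have step : ∀ i, 1 ≤ i → i + 3 ≤ n → ((i : ℂ) + 1) * ψ i = 2 * ψ 1 →
      ((i : ℂ) + 3) * ψ (i + 2) = 2 * ψ 1 := by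
    intro i hi h3 hind
    have h := E1 i 1 hi le_rfl (by omega)
    rw [show i + 1 + 1 = i + 2 from by omega] at h
    have key : ψ 1 * (((i : ℂ) + 3) * ψ (i + 2)) = ψ 1 * (2 * ψ 1) := by
      linear_combination (-(i : ℂ) - 1) * h + (ψ 1 - ψ (i + 2)) * hind
    exact mul_left_cancel₀ h1 key
  have step0 : ∀ i, 1 ≤ i → i + 3 ≤ n → ψ i = 0 → ψ (i + 2) = 0 := by
    intro i hi h3 h0
    have h := E1 i 1 hi le_rfl (by omega)
    rw [show i + 1 + 1 = i + 2 from by omega, h0] at h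
    have : ψ 1 * ψ (i + 2) = 0 := by linear_combination -h
    rcases mul_eq_zero.mp this with hc | hc
    · exact absurd hc h1
    · exact hc
  have hpsin : ψ n = 0 := by
    by_contra hne
    have h12 : ψ 1 = ψ 2 := mul_left_cancel₀ hne (E3 1 le_rfl (by omega))
    have h23 : ψ 2 = ψ 3 := mul_left_cancel₀ hne (E3 2 (by omega) (by omega))
    have h11 := E1 1 1 le_rfl le_rfl (by omega)
    norm_num at h11
    have h13 : ψ 1 = ψ 3 := h12.trans h23
    have hsq : ψ 1 * ψ 1 = 0 := by linear_combination (-1 : ℂ) * h11 + 2 * ψ 1 * h13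
    exact h1 (mul_self_eq_zero.mp hsq)
  have oddmain : ∀ m : ℕ, 2 * m + 1 ≤ n - 1 →
      (((2 * m + 1 : ℕ) : ℂ) + 1) * ψ (2 * m + 1) = 2 * ψ 1 := by
    intro m
    induction m with
    | zero => intro _; push_cast; ring
    | succ m ih =>
      intro hm
      have prev := ih (by omega)
      have hs := step (2 * m + 1) (by omega) (by omega)
        (by push_cast at prev ⊢; linear_combination prev)
      rw [show 2 * m + 1 + 2 = 2 * (m + 1) + 1 from by omega] at hs
      push_cast at hs ⊢
      linear_combination hs
  refine ⟨hpsin, ?_, ?_⟩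
  · intro h2 i hi1 hi2
    have h11 := E1 1 1 le_rfl le_rfl (by omega)
    have h22 := E1 2 2 (by omega) (by omega) (by omega)
    have h13 := E1 1 3 le_rfl (by omega) (by omega)
    norm_num at h11 h22 h13
    have e3 : ψ 1 = 2 * ψ 3 := mul_left_cancel₀ h1 (by linear_combination h11)
    have e5 : ψ 2 = 2 * ψ 5 := mul_left_cancel₀ h2 (by linear_combination h22)
    have hψ3 : ψ 3 ≠ 0 := fun h => h1 (by rw [e3, h, mul_zero])
    have e135 : 2 * ψ 3 = 3 * ψ 5 :=
      mul_left_cancel₀ hψ3 (by linear_combination h13 + (ψ 5 - ψ 3) * e3)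
    have base2 : (3 : ℂ) * ψ 2 = 2 * ψ 1 := by linear_combination 3 * e5 - 2 * e3 - 2 * e135
    have evenmain : ∀ m : ℕ, 2 * m + 2 ≤ n - 1 →
        (((2 * m + 2 : ℕ) : ℂ) + 1) * ψ (2 * m + 2) = 2 * ψ 1 := by
      intro m
      induction m with
      | zero => intro _; norm_num; linear_combination base2
      | succ m ih =>
        intro hm
        have prev := ih (by omega)
        have hs := step (2 * m + 2) (by omega) (by omega)
          (by push_cast at prev ⊢; linear_combination prev)
        rw [show 2 * m + 2 + 2 = 2 * (m + 1) + 2 from by omega] at hs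
        push_cast at hs ⊢
        linear_combination hs
    rcases Nat.even_or_odd i with he | ho
    · obtain ⟨m, rfl⟩ := he
      have := evenmain (m - 1) (by omega)
      rw [show 2 * (m - 1) + 2 = m + m from by omega] at this
      exact this
    · obtain ⟨m, rfl⟩ := ho
      exact oddmain m (by omega)
  · intro h2 i hi1 hi2
    have evenzero : ∀ m : ℕ, 2 * m + 2 ≤ n - 1 → ψ (2 * m + 2) = 0 := by
      intro m
      induction m with
      | zero => intro _; exact h2
      | succ m ih =>
        intro hm
        have hs := step0 (2 * m + 2) (by omega) (by omega) (ih (by omega))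
        rw [show 2 * m + 2 + 2 = 2 * (m + 1) + 2 from by omega] at hs
        exact hs
    constructor
    · intro ho
      obtain ⟨m, rfl⟩ := ho
      exact oddmain m (by omega)
    · intro he
      obtain ⟨m, rfl⟩ := he
      have := evenzero (m - 1) (by omega)
      rw [show 2 * (m - 1) + 2 = m + m from by omega] at this
      exact this
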